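/- Let Y be a metric space equipped with its Hausdorff 2-measure H². If y ∈ Y is a point such that it is not the case that lim_{r→0} H²(B(y,r))/r² = ∞ (i.e., there exist k > 0 and a sequence of radii r_n → 0 with H²(B(y,r_n)) ≤ k·r_n²), then the 2-modulus of the family of non-constant curves in Y passing through y is zero. -/

import Mathlib

open Metric MeasureTheory Filter Set
open scoped ENNReal NNReal Topology

/-!
STATEMENT 9: Uniformization of length surfaces by weakly (4/π)-quasiconformal maps.

Let `X` be a length surface of locally finite Hausdorff 2-measure homeomorphic to the
2-sphere, the closed unit disk, or the plane `ℂ`.  Then there is a weakly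
`4/π`-quasiconformal map `h : Ω → X`, where `Ω` is respectively the 2-sphere, the closed
unit disk, or (in the third case) either the open unit disk or the plane.

The 2-sphere is realized as the unit sphere in Euclidean 3-space; its restricted metric
induces the same curve lengths, the same Hausdorff 2-measure and hence the same moduli of
curve families as the Riemannian spherical metric.  A map is weakly `K`-quasiconformal if
it is continuous, surjective and monotone (preimages of points are connected) and
`Mod Γ ≤ K · Mod h(Γ)` for every curve family `Γ`, where the 2-modulus is computed with
respect to the Hausdorff 2-measure (normalized so as to coincide with Lebesgue measure on
the plane) and line integrals are with respect to arc length via unit-speed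
reparametrization.
-/

/-- A curve in a metric space: a continuous map on a compact interval. -/
structure Curve (X : Type*) [MetricSpace X] where
  a : ℝ
  b : ℝ
  hab : a ≤ b
  toFun : ℝ → X
  cont : ContinuousOn toFun (Set.Icc a b)

namespace Curve
variable {X Y : Type*} [MetricSpace X] [MetricSpace Y]

/-- The length of a curve: the total variation of its parametrization. -/
noncomputable def length (γ : Curve X) : ℝ≥0∞ := eVariationOn γ.toFun (Set.Icc γ.a γ.b)

/-- The integral of `ρ` along a (rectifiable) curve with respect to arc length, computed
via the unit-speed (natural) reparametrization of the curve. -/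
noncomputable def lineIntegral (γ : Curve X) (ρ : X → ℝ≥0∞) : ℝ≥0∞ :=
  ∫⁻ s in Set.Icc (0 : ℝ) γ.length.toReal,
    ρ (naturalParameterization γ.toFun (Set.Icc γ.a γ.b) γ.a s)

/-- The image curve `h ∘ γ` under a continuous map `h`. -/
def map (γ : Curve X) (h : X → Y) (hh : Continuous h) : Curve Y :=
  ⟨γ.a, γ.b, γ.hab, h ∘ γ.toFun, hh.comp_continuousOn γ.cont⟩

end Curve

/-- The Hausdorff 2-measure, normalized so as to coincide with Lebesgue measure on `ℝ²`. -/
noncomputable def hausdorff2 (X : Type*) [MetricSpace X] [MeasurableSpace X] [BorelSpace X] :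
    Measure X := (ENNReal.ofReal (Real.pi / 4)) • MeasureTheory.Measure.hausdorffMeasure 2

/-- `ρ` is admissible for the curve family `Γ` if it is Borel and `∫_γ ρ ds ≥ 1` for
every rectifiable curve `γ ∈ Γ`. -/
def Admissible {X : Type*} [MetricSpace X] [MeasurableSpace X] [BorelSpace X]
    (ρ : X → ℝ≥0∞) (Γ : Set (Curve X)) : Prop :=
  Measurable ρ ∧ ∀ γ ∈ Γ, γ.length ≠ ⊤ → 1 ≤ γ.lineIntegral ρ

/-- The 2-modulus of a curve family, with respect to the Hausdorff 2-measure. -/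
noncomputable def modulus {X : Type*} [MetricSpace X] [MeasurableSpace X] [BorelSpace X]
    (Γ : Set (Curve X)) : ℝ≥0∞ :=
  ⨅ (ρ : X → ℝ≥0∞) (_ : Admissible ρ Γ), ∫⁻ x, (ρ x) ^ 2 ∂(hausdorff2 X)

/-!
STATEMENT 14: If at some point `y` of a metric space `Y` it is not the case that
`lim_{r→0} H²(B(y,r))/r² = ∞` — that is, there are `k > 0` and radii `rₙ → 0` with
`H²(B(y,rₙ)) ≤ k·rₙ²` — then the 2-modulus of the family of non-constant curves passing
through `y` is zero.
-/

/-- The trace (image) of a curve. -/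
def Curve.trace {X : Type*} [MetricSpace X] (γ : Curve X) : Set X :=
  γ.toFun '' Set.Icc γ.a γ.b

/-- The family of non-constant curves passing through the point `y`. -/
def curvesThrough {Y : Type*} [MetricSpace Y] (y : Y) : Set (Curve Y) :=
  {γ | y ∈ γ.trace ∧
    ∃ s ∈ Set.Icc γ.a γ.b, ∃ t ∈ Set.Icc γ.a γ.b, γ.toFun s ≠ γ.toFun t}

/-!
Fix `d > 0` and radii `r₀ ≤ d` with `2 r_{j+1} ≤ r_j` and `H²(B(y, r_j)) ≤ k r_j²`; let `ρ_N` be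
the average over `j < N` of `1_{B(y, r_j)} / r_j`. A rectifiable curve through `y` that leaves
`B(y, d)` has arc length at least `r_j` inside each `B(y, r_j)`, so `ρ_N` is admissible for these
curves. Since the radii decay geometrically, `ρ_N² ≤ (4 / N²) ∑_j 1_{B(y, r_j)} / r_j²`, whence
`∫ ρ_N² dH² ≤ 4k / N`. So the curves through `y` leaving `B(y, d)` have modulus zero; the
non-constant curves through `y` are covered by these families for `d = 1 / (n + 1)`, and modulus is
countably subadditive.
-/

theorem LocallyBoundedVariationOn.continuousOn_variationOnFromTo {α E : Type*} [LinearOrder α]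
    [TopologicalSpace α] [OrderTopology α] [PseudoMetricSpace E] {f : α → E} {s : Set α}
    (hf : LocallyBoundedVariationOn f s) (hc : ContinuousOn f s) {a : α} (ha : a ∈ s) :
    ContinuousOn (variationOnFromTo f s a) s := by
  intro x hx
  have hleft := variationOnFromTo.tendsto_left ha hx hf ((hc x hx).mono inter_subset_left)
  have hright := variationOnFromTo.tendsto_right ha hx hf ((hc x hx).mono inter_subset_left)
  rw [dist_self, sub_zero] at hleft
  rw [dist_self, add_zero] at hright
  refine ((ContinuousWithinAt.union hleft hright).union continuousWithinAt_singleton).mono ?_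
  intro z hz
  rcases lt_trichotomy z x with h | rfl | h
  exacts [.inl (.inl ⟨hz, h⟩), .inr rfl, .inl (.inr ⟨hz, h⟩)]

theorem HasConstantSpeedOnWith.lipschitzOnWith {E : Type*} [PseudoEMetricSpace E] {f : ℝ → E}
    {s : Set ℝ} {l : ℝ≥0} (h : HasConstantSpeedOnWith f s l) : LipschitzOnWith l f s := by
  have key : ∀ x ∈ s, ∀ y ∈ s, x ≤ y → edist (f x) (f y) ≤ l * edist x y := fun x hx y hy hxy ↦
    calc edist (f x) (f y) ≤ eVariationOn f (s ∩ Icc x y) :=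
          eVariationOn.edist_le f ⟨hx, le_rfl, hxy⟩ ⟨hy, hxy, le_rfl⟩
      _ = l * edist x y := by
          rw [hasConstantSpeedOnWith_iff_ordered.1 h hx hy hxy, edist_comm,
            edist_dist, Real.dist_eq, abs_of_nonneg (sub_nonneg.2 hxy),
            ENNReal.ofReal_mul l.coe_nonneg, ENNReal.ofReal_coe_nnreal]
  intro x hx y hy
  rcases le_total x y with hxy | hyx
  · exact key x hx y hy hxy
  · rw [edist_comm, edist_comm x]
    exact key y hy x hx hyx

theorem image_variationOnFromTo_Icc {E : Type*} [PseudoMetricSpace E] {f : ℝ → E} {a b : ℝ}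
    (hab : a ≤ b) (hc : ContinuousOn f (Icc a b)) (hf : BoundedVariationOn f (Icc a b)) :
    variationOnFromTo f (Icc a b) a '' Icc a b = Icc 0 (eVariationOn f (Icc a b)).toReal := by
  have ha : a ∈ Icc a b := left_mem_Icc.2 hab
  have hmono := variationOnFromTo.monotoneOn hf.locallyBoundedVariationOn ha
  have hva : variationOnFromTo f (Icc a b) a a = 0 := variationOnFromTo.self f _ a
  have hvb : variationOnFromTo f (Icc a b) a b = (eVariationOn f (Icc a b)).toReal := by
    rw [variationOnFromTo.eq_of_le f _ hab, inter_self]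
  refine (hmono.image_Icc_subset.trans ?_).antisymm ?_
  · rw [hva, hvb]
  · have := intermediate_value_Icc hab
      (hf.locallyBoundedVariationOn.continuousOn_variationOnFromTo hc ha)
    rwa [hva, hvb] at this

theorem lipschitzOnWith_naturalParameterization {E : Type*} [PseudoMetricSpace E] {f : ℝ → E}
    {a b : ℝ} (hab : a ≤ b) (hc : ContinuousOn f (Icc a b)) (hf : BoundedVariationOn f (Icc a b)) :
    LipschitzOnWith 1 (naturalParameterization f (Icc a b) a)
      (Icc 0 (eVariationOn f (Icc a b)).toReal) := by
  rw [← image_variationOnFromTo_Icc hab hc hf]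
  exact (has_unit_speed_naturalParameterization f hf.locallyBoundedVariationOn
    (left_mem_Icc.2 hab)).lipschitzOnWith

theorem ofReal_le_volume_ball_inter {s : Set ℝ} (hs : s.OrdConnected) {x y r : ℝ} (hx : x ∈ s)
    (hy : y ∈ s) (hr : r ≤ dist y x) : ENNReal.ofReal r ≤ volume (ball x r ∩ s) := by
  rw [Real.dist_eq] at hr
  rcases le_total x y with hxy | hyx
  · rw [abs_of_nonneg (sub_nonneg.2 hxy)] at hr
    calc ENNReal.ofReal r = volume (Ico x (x + r)) := by rw [Real.volume_Ico, add_sub_cancel_left]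
      _ ≤ volume (ball x r ∩ s) := measure_mono fun σ hσ ↦
          ⟨by rw [Real.ball_eq_Ioo]; exact ⟨by linarith [hσ.1, hσ.2], hσ.2⟩,
            hs.out hx hy ⟨hσ.1, by linarith [hσ.2]⟩⟩
  · rw [abs_of_nonpos (sub_nonpos.2 hyx)] at hr
    calc ENNReal.ofReal r = volume (Ioc (x - r) x) := by rw [Real.volume_Ioc, sub_sub_cancel]
      _ ≤ volume (ball x r ∩ s) := measure_mono fun σ hσ ↦
          ⟨by rw [Real.ball_eq_Ioo]; exact ⟨hσ.1, by linarith [hσ.1, hσ.2]⟩,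
            hs.out hy hx ⟨by linarith [hσ.1], hσ.2⟩⟩

namespace Curve

variable {X : Type*} [MetricSpace X] (γ : Curve X)

theorem lipschitzOnWith_naturalParameterization (hγ : γ.length ≠ ⊤) :
    LipschitzOnWith 1 (naturalParameterization γ.toFun (Icc γ.a γ.b) γ.a)
      (Icc 0 γ.length.toReal) :=
  _root_.lipschitzOnWith_naturalParameterization γ.hab γ.cont hγ

theorem exists_naturalParameterization_eq (hγ : γ.length ≠ ⊤) {x : X} (hx : x ∈ γ.trace) :
    ∃ σ ∈ Icc 0 γ.length.toReal, naturalParameterization γ.toFun (Icc γ.a γ.b) γ.a σ = x := by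
  obtain ⟨t, ht, rfl⟩ := hx
  refine ⟨variationOnFromTo γ.toFun (Icc γ.a γ.b) γ.a t, ?_, ?_⟩
  · exact image_variationOnFromTo_Icc γ.hab γ.cont hγ ▸ mem_image_of_mem _ ht
  · exact edist_eq_zero.1 (edist_naturalParameterization_eq_zero
      (BoundedVariationOn.locallyBoundedVariationOn hγ) (left_mem_Icc.2 γ.hab) ht)

theorem lineIntegral_mono {ρ ρ' : X → ℝ≥0∞} (h : ρ ≤ ρ') :
    γ.lineIntegral ρ ≤ γ.lineIntegral ρ' :=
  lintegral_mono fun _ ↦ h _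

theorem lineIntegral_const_mul {c : ℝ≥0∞} (hc : c ≠ ⊤) (ρ : X → ℝ≥0∞) :
    γ.lineIntegral (fun x ↦ c * ρ x) = c * γ.lineIntegral ρ :=
  lintegral_const_mul' c _ hc

theorem lineIntegral_finsetSum [MeasurableSpace X] [BorelSpace X] (hγ : γ.length ≠ ⊤)
    {ι : Type*} (s : Finset ι) {ρ : ι → X → ℝ≥0∞} (hρ : ∀ i ∈ s, Measurable (ρ i)) :
    γ.lineIntegral (fun x ↦ ∑ i ∈ s, ρ i x) = ∑ i ∈ s, γ.lineIntegral (ρ i) :=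
  lintegral_finsetSum' s fun i hi ↦ (hρ i hi).comp_aemeasurable
    ((γ.lipschitzOnWith_naturalParameterization hγ).continuousOn.aemeasurable measurableSet_Icc)

/-- The unit-speed parametrization is 1-Lipschitz, so it stays in `B(y, r)` on a parameter
interval of length `r` next to a time at which it passes through `y`. -/
theorem mul_ofReal_le_lineIntegral_indicator_ball (hγ : γ.length ≠ ⊤) {y z : X}
    (hy : y ∈ γ.trace) (hz : z ∈ γ.trace) {r : ℝ} (hr : r ≤ dist z y) (c : ℝ≥0∞) :
    c * ENNReal.ofReal r ≤ γ.lineIntegral ((ball y r).indicator fun _ ↦ c) := by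
  set Γ := naturalParameterization γ.toFun (Icc γ.a γ.b) γ.a
  have hΓ := γ.lipschitzOnWith_naturalParameterization hγ
  obtain ⟨σ₀, hσ₀, rfl⟩ := γ.exists_naturalParameterization_eq hγ hy
  obtain ⟨σ₁, hσ₁, rfl⟩ := γ.exists_naturalParameterization_eq hγ hz
  have hσ : r ≤ dist σ₁ σ₀ := by simpa using hr.trans (hΓ.dist_le_mul σ₁ hσ₁ σ₀ hσ₀)
  have hmaps : ∀ σ ∈ Icc 0 γ.length.toReal, σ ∈ ball σ₀ r → Γ σ ∈ ball (Γ σ₀) r :=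
    fun σ hσI hσB ↦ mem_ball.2 <| (show dist (Γ σ) (Γ σ₀) ≤ dist σ σ₀ by
      simpa using hΓ.dist_le_mul σ hσI σ₀ hσ₀).trans_lt hσB
  calc c * ENNReal.ofReal r ≤ c * volume (ball σ₀ r ∩ Icc 0 γ.length.toReal) := by
        gcongr; exact ofReal_le_volume_ball_inter ordConnected_Icc hσ₀ hσ₁ hσ
    _ = ∫⁻ σ in Icc 0 γ.length.toReal, (ball σ₀ r).indicator (fun _ ↦ c) σ := by
        rw [lintegral_indicator_const measurableSet_ball, Measure.restrict_apply measurableSet_ball]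
    _ ≤ γ.lineIntegral ((ball (Γ σ₀) r).indicator fun _ ↦ c) :=
        setLIntegral_mono' measurableSet_Icc fun σ hσ ↦ indicator_apply_le'
          (fun h ↦ (indicator_of_mem (hmaps σ hσ h) fun _ ↦ c).ge) fun _ ↦ zero_le

end Curve

theorem exists_seq_two_mul_le_of_frequently {P : ℝ → Prop} (h : ∃ᶠ c in 𝓝[>] 0, P c) {d : ℝ}
    (hd : 0 < d) : ∃ r : ℕ → ℝ, (∀ j, 0 < r j ∧ r j ≤ d ∧ P (r j)) ∧ ∀ j, 2 * r (j + 1) ≤ r j := by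
  obtain ⟨r, hr, hr2⟩ := exists_seq_of_forall_finset_exists (fun c ↦ 0 < c ∧ c ≤ d ∧ P c)
    (fun x c ↦ 2 * c ≤ x) fun s hs ↦ by
      have hsmall : ∀ x ∈ s, ∀ᶠ c in 𝓝[>] (0 : ℝ), 2 * c ≤ x := fun x hx ↦
        nhdsWithin_le_nhds <| (eventually_le_nhds (half_pos (hs x hx).1)).mono fun c hc ↦ by
          linarith
      have hev : ∀ᶠ c in 𝓝[>] (0 : ℝ), (0 < c ∧ c ≤ d) ∧ ∀ x ∈ s, 2 * c ≤ x :=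
        (eventually_mem_nhdsWithin.and (nhdsWithin_le_nhds (eventually_le_nhds hd))).and
          ((eventually_all_finset s).2 hsmall)
      obtain ⟨c, hPc, ⟨hc, hcd⟩, hcs⟩ := (h.and_eventually hev).exists
      exact ⟨c, ⟨hc, hcd, hPc⟩, hcs⟩
  exact ⟨r, hr, fun j ↦ hr2 j (j + 1) j.lt_succ_self⟩

theorem sum_range_succ_inv_le_two_mul_inv {r : ℕ → ℝ} (hr : ∀ j, 0 < r j)
    (hr2 : ∀ j, 2 * r (j + 1) ≤ r j) (j : ℕ) :
    ∑ i ∈ Finset.range (j + 1), (r i)⁻¹ ≤ 2 * (r j)⁻¹ := by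
  induction j with
  | zero =>
    simp only [zero_add, Finset.sum_range_one]
    linarith [inv_pos.2 (hr 0)]
  | succ j ih =>
    have hstep : 2 * (r j)⁻¹ ≤ (r (j + 1))⁻¹ := by
      rw [← div_eq_mul_inv, inv_eq_one_div, div_le_div_iff₀ (hr j) (hr (j + 1))]
      linarith [hr2 j]
    rw [Finset.sum_range_succ]
    linarith

theorem ENNReal.sq_sum_range_le_two_mul {a c : ℕ → ℝ≥0∞}
    (h : ∀ j, a j * ∑ i ∈ Finset.range (j + 1), a i ≤ c j) (N : ℕ) :
    (∑ j ∈ Finset.range N, a j) ^ 2 ≤ 2 * ∑ j ∈ Finset.range N, c j := by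
  induction N with
  | zero => simp
  | succ N ih =>
    have hN := h N
    rw [Finset.sum_range_succ] at hN
    rw [Finset.sum_range_succ, Finset.sum_range_succ, mul_add]
    set S := ∑ j ∈ Finset.range N, a j
    calc (S + a N) ^ 2 ≤ (S + a N) ^ 2 + a N ^ 2 := le_self_add
      _ = S ^ 2 + 2 * (a N * (S + a N)) := by ring
      _ ≤ 2 * ∑ j ∈ Finset.range N, c j + 2 * c N := by gcongr

section BallDensity

variable {Y : Type*} [MetricSpace Y]

noncomputable def ballDensity (y : Y) (r : ℕ → ℝ) (N : ℕ) (x : Y) : ℝ≥0∞ :=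
  (N : ℝ≥0∞)⁻¹ * ∑ j ∈ Finset.range N, (ball y (r j)).indicator (fun _ ↦ ENNReal.ofReal (r j)⁻¹) x

theorem indicator_ball_mul_sum_le {y : Y} {r : ℕ → ℝ} (hr : ∀ j, 0 < r j)
    (hr2 : ∀ j, 2 * r (j + 1) ≤ r j) (x : Y) (j : ℕ) :
    (ball y (r j)).indicator (fun _ ↦ ENNReal.ofReal (r j)⁻¹) x *
        ∑ i ∈ Finset.range (j + 1), (ball y (r i)).indicator (fun _ ↦ ENNReal.ofReal (r i)⁻¹) x ≤
      (ball y (r j)).indicator (fun _ ↦ 2 * ENNReal.ofReal (r j)⁻¹ ^ 2) x := by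
  by_cases hx : x ∈ ball y (r j)
  · rw [indicator_of_mem hx, indicator_of_mem hx]
    calc ENNReal.ofReal (r j)⁻¹ * ∑ i ∈ Finset.range (j + 1),
          (ball y (r i)).indicator (fun _ ↦ ENNReal.ofReal (r i)⁻¹) x
        ≤ ENNReal.ofReal (r j)⁻¹ * ∑ i ∈ Finset.range (j + 1), ENNReal.ofReal (r i)⁻¹ := by
          gcongr with i; exact indicator_le_self _ _ x
      _ = ENNReal.ofReal (r j)⁻¹ * ENNReal.ofReal (∑ i ∈ Finset.range (j + 1), (r i)⁻¹) := by
          rw [ENNReal.ofReal_sum_of_nonneg fun i _ ↦ (inv_pos.2 (hr i)).le]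
      _ ≤ ENNReal.ofReal (r j)⁻¹ * ENNReal.ofReal (2 * (r j)⁻¹) := by
          gcongr; exact sum_range_succ_inv_le_two_mul_inv hr hr2 j
      _ = 2 * ENNReal.ofReal (r j)⁻¹ ^ 2 := by
          rw [ENNReal.ofReal_mul zero_le_two, ENNReal.ofReal_ofNat]; ring
  · rw [indicator_of_notMem hx, zero_mul]
    exact zero_le

theorem lintegral_ballDensity_sq_le [MeasurableSpace Y] [OpensMeasurableSpace Y] (μ : Measure Y)
    {y : Y} {r : ℕ → ℝ} {k : ℝ} (hr : ∀ j, 0 < r j) (hr2 : ∀ j, 2 * r (j + 1) ≤ r j)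
    (hμ : ∀ j, μ (ball y (r j)) ≤ ENNReal.ofReal (k * r j ^ 2)) {N : ℕ} (hN : N ≠ 0) :
    ∫⁻ x, ballDensity y r N x ^ 2 ∂μ ≤ ENNReal.ofReal (4 * k) / N := by
  have hpt : ∀ x, ballDensity y r N x ^ 2 ≤ (N : ℝ≥0∞)⁻¹ ^ 2 *
      (2 * ∑ j ∈ Finset.range N,
        (ball y (r j)).indicator (fun _ ↦ 2 * ENNReal.ofReal (r j)⁻¹ ^ 2) x) :=
    fun x ↦ by
      rw [ballDensity, mul_pow]
      gcongr
      exact ENNReal.sq_sum_range_le_two_mul (indicator_ball_mul_sum_le hr hr2 x) N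
  have hball : ∀ j, 2 * ENNReal.ofReal (r j)⁻¹ ^ 2 * μ (ball y (r j)) ≤ 2 * ENNReal.ofReal k :=
    fun j ↦ calc
      2 * ENNReal.ofReal (r j)⁻¹ ^ 2 * μ (ball y (r j))
          ≤ 2 * ENNReal.ofReal (r j)⁻¹ ^ 2 * ENNReal.ofReal (k * r j ^ 2) := by gcongr; exact hμ j
      _ = 2 * ENNReal.ofReal k := by
          rw [← ENNReal.ofReal_pow (inv_pos.2 (hr j)).le, mul_assoc,
            ← ENNReal.ofReal_mul (by positivity)]
          congr 2
          field_simp [(hr j).ne']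
  have hN' : (N : ℝ≥0∞)⁻¹ * N = 1 := ENNReal.inv_mul_cancel (Nat.cast_ne_zero.2 hN) (by simp)
  calc ∫⁻ x, ballDensity y r N x ^ 2 ∂μ
      ≤ ∫⁻ x, (N : ℝ≥0∞)⁻¹ ^ 2 * (2 * ∑ j ∈ Finset.range N,
          (ball y (r j)).indicator (fun _ ↦ 2 * ENNReal.ofReal (r j)⁻¹ ^ 2) x) ∂μ :=
        lintegral_mono hpt
    _ = (N : ℝ≥0∞)⁻¹ ^ 2 * (2 * ∑ j ∈ Finset.range N,
          2 * ENNReal.ofReal (r j)⁻¹ ^ 2 * μ (ball y (r j))) := by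
        rw [lintegral_const_mul' _ _ (by simp [hN]), lintegral_const_mul' _ _ (by simp),
          lintegral_finsetSum _ fun j _ ↦ measurable_const.indicator measurableSet_ball]
        simp_rw [lintegral_indicator_const measurableSet_ball]
    _ ≤ (N : ℝ≥0∞)⁻¹ ^ 2 * (2 * ∑ _j ∈ Finset.range N, 2 * ENNReal.ofReal k) := by
        gcongr (N : ℝ≥0∞)⁻¹ ^ 2 * (2 * ?_)
        exact Finset.sum_le_sum fun j _ ↦ hball j
    _ = ENNReal.ofReal (4 * k) / N := by
        rw [Finset.sum_const, Finset.card_range, nsmul_eq_mul, ENNReal.div_eq_inv_mul,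
          ENNReal.ofReal_mul zero_le_four, ENNReal.ofReal_ofNat]
        calc (N : ℝ≥0∞)⁻¹ ^ 2 * (2 * (N * (2 * ENNReal.ofReal k)))
            = ((N : ℝ≥0∞)⁻¹ * N) * ((N : ℝ≥0∞)⁻¹ * (4 * ENNReal.ofReal k)) := by ring
          _ = (N : ℝ≥0∞)⁻¹ * (4 * ENNReal.ofReal k) := by rw [hN', one_mul]

end BallDensity

section Modulus

variable {Y : Type*} [MetricSpace Y]

def curvesThroughExitingBall (y : Y) (d : ℝ) : Set (Curve Y) :=
  {γ | y ∈ γ.trace ∧ ∃ z ∈ γ.trace, d ≤ dist z y}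

theorem curvesThrough_subset_iUnion_curvesThroughExitingBall (y : Y) :
    curvesThrough y ⊆ ⋃ n : ℕ, curvesThroughExitingBall y (1 / (n + 1)) := by
  rintro γ ⟨hy, s, hs, t, ht, hst⟩
  obtain ⟨z, hz, hzy⟩ : ∃ z ∈ γ.trace, z ≠ y := by
    by_cases h : γ.toFun s = y
    · exact ⟨γ.toFun t, mem_image_of_mem _ ht, fun h' ↦ hst (h.trans h'.symm)⟩
    · exact ⟨γ.toFun s, mem_image_of_mem _ hs, h⟩
  obtain ⟨n, hn⟩ := exists_nat_one_div_lt (dist_pos.2 hzy)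
  exact mem_iUnion.2 ⟨n, hy, z, hz, hn.le⟩

variable [MeasurableSpace Y] [BorelSpace Y]

theorem admissible_ballDensity {y : Y} {d : ℝ} {r : ℕ → ℝ} (hr : ∀ j, 0 < r j ∧ r j ≤ d)
    {N : ℕ} (hN : N ≠ 0) : Admissible (ballDensity y r N) (curvesThroughExitingBall y d) := by
  refine ⟨measurable_const.mul (Finset.measurable_sum _ fun j _ ↦
    measurable_const.indicator measurableSet_ball), ?_⟩
  rintro γ ⟨hy, z, hz, hdz⟩ hγ
  have hterm : ∀ j, 1 ≤ γ.lineIntegral ((ball y (r j)).indicator fun _ ↦ ENNReal.ofReal (r j)⁻¹) :=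
    fun j ↦ calc
      1 = ENNReal.ofReal (r j)⁻¹ * ENNReal.ofReal (r j) := by
        rw [← ENNReal.ofReal_mul (inv_pos.2 (hr j).1).le, inv_mul_cancel₀ (hr j).1.ne',
          ENNReal.ofReal_one]
      _ ≤ _ := γ.mul_ofReal_le_lineIntegral_indicator_ball hγ hy hz ((hr j).2.trans hdz) _
  calc 1 = (N : ℝ≥0∞)⁻¹ * ∑ _j ∈ Finset.range N, 1 := by
        simp [ENNReal.inv_mul_cancel (Nat.cast_ne_zero.2 hN)]
    _ ≤ (N : ℝ≥0∞)⁻¹ * ∑ j ∈ Finset.range N,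
          γ.lineIntegral ((ball y (r j)).indicator fun _ ↦ ENNReal.ofReal (r j)⁻¹) := by
        gcongr with j; exact hterm j
    _ = γ.lineIntegral (ballDensity y r N) := by
        rw [← γ.lineIntegral_finsetSum hγ _ fun j _ ↦ measurable_const.indicator measurableSet_ball,
          ← γ.lineIntegral_const_mul (by simp [hN])]
        rfl

theorem modulus_le_lintegral {ρ : Y → ℝ≥0∞} {Γ : Set (Curve Y)} (hρ : Admissible ρ Γ) :
    modulus Γ ≤ ∫⁻ x, ρ x ^ 2 ∂(hausdorff2 Y) :=
  iInf₂_le ρ hρ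

theorem modulus_mono {Γ Γ' : Set (Curve Y)} (h : Γ ⊆ Γ') : modulus Γ ≤ modulus Γ' :=
  biInf_mono fun _ hρ ↦ ⟨hρ.1, fun γ hγ ↦ hρ.2 γ (h hγ)⟩

theorem modulus_iUnion_le (Γ : ℕ → Set (Curve Y)) :
    modulus (⋃ n, Γ n) ≤ ∑' n, modulus (Γ n) := by
  refine ENNReal.le_of_forall_pos_le_add fun ε hε hfin ↦ ?_
  obtain ⟨δ, hδ, hδε⟩ := ENNReal.exists_pos_sum_of_countable (ENNReal.coe_ne_zero.2 hε.ne') ℕ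
  have hnear : ∀ n, ∃ ρ, Admissible ρ (Γ n) ∧
      ∫⁻ x, ρ x ^ 2 ∂(hausdorff2 Y) < modulus (Γ n) + δ n := fun n ↦ by
    have hlt : modulus (Γ n) < modulus (Γ n) + δ n :=
      ENNReal.lt_add_right (ne_top_of_le_ne_top hfin.ne (ENNReal.le_tsum n))
        (ENNReal.coe_ne_zero.2 (hδ n).ne')
    simpa [modulus, iInf_lt_iff] using hlt
  choose ρ hρ hρlt using hnear
  have hadm : Admissible (fun x ↦ ⨆ n, ρ n x) (⋃ n, Γ n) := by
    refine ⟨Measurable.iSup fun n ↦ (hρ n).1, fun γ hγ hlen ↦ ?_⟩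
    obtain ⟨n, hn⟩ := mem_iUnion.1 hγ
    exact ((hρ n).2 γ hn hlen).trans (γ.lineIntegral_mono fun x ↦ le_iSup (ρ · x) n)
  calc modulus (⋃ n, Γ n) ≤ ∫⁻ x, (⨆ n, ρ n x) ^ 2 ∂(hausdorff2 Y) := modulus_le_lintegral hadm
    _ ≤ ∫⁻ x, ∑' n, ρ n x ^ 2 ∂(hausdorff2 Y) := lintegral_mono fun x ↦ by
        rw [ENNReal.iSup_pow]
        exact iSup_le fun n ↦ ENNReal.le_tsum (f := fun n ↦ ρ n x ^ 2) n
    _ = ∑' n, ∫⁻ x, ρ n x ^ 2 ∂(hausdorff2 Y) :=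
        lintegral_tsum fun n ↦ ((hρ n).1.pow_const 2).aemeasurable
    _ ≤ ∑' n, (modulus (Γ n) + δ n) := ENNReal.tsum_le_tsum fun n ↦ (hρlt n).le
    _ ≤ ∑' n, modulus (Γ n) + ε := by
        rw [ENNReal.tsum_add]; gcongr

theorem modulus_curvesThroughExitingBall_eq_zero {y : Y} {k : ℝ}
    (h : ∃ᶠ c in 𝓝[>] 0, hausdorff2 Y (ball y c) ≤ ENNReal.ofReal (k * c ^ 2)) {d : ℝ}
    (hd : 0 < d) : modulus (curvesThroughExitingBall y d) = 0 := by
  obtain ⟨r, hr, hr2⟩ := exists_seq_two_mul_le_of_frequently h hd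
  have hbound : ∀ᶠ N : ℕ in atTop,
      modulus (curvesThroughExitingBall y d) ≤ ENNReal.ofReal (4 * k) * (N : ℝ≥0∞)⁻¹ :=
    (eventually_ne_atTop 0).mono fun N hN ↦
      (modulus_le_lintegral (admissible_ballDensity (fun j ↦ ⟨(hr j).1, (hr j).2.1⟩) hN)).trans <|
        (lintegral_ballDensity_sq_le _ (fun j ↦ (hr j).1) hr2 (fun j ↦ (hr j).2.2) hN).trans_eq
          (div_eq_mul_inv _ _)
  have hlim : Tendsto (fun N : ℕ ↦ ENNReal.ofReal (4 * k) * (N : ℝ≥0∞)⁻¹) atTop (𝓝 0) := by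
    simpa using ENNReal.Tendsto.const_mul ENNReal.tendsto_inv_nat_nhds_zero
      (Or.inr (ENNReal.ofReal_ne_top (r := 4 * k)))
  exact nonpos_iff_eq_zero.1 (ge_of_tendsto hlim hbound)

end Modulus

theorem modulus_curvesThrough_eq_zero
    (Y : Type) [MetricSpace Y] [MeasurableSpace Y] [BorelSpace Y]
    (y : Y)
    (hy : ∃ k : ℝ, 0 < k ∧ ∃ r : ℕ → ℝ, (∀ n, 0 < r n) ∧
      Filter.Tendsto r Filter.atTop (nhds 0) ∧
      ∀ n, hausdorff2 Y (Metric.ball y (r n)) ≤ ENNReal.ofReal (k * (r n) ^ 2)) :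
    modulus (curvesThrough y) = 0 := by
  obtain ⟨k, -, r, hr_pos, hr_lim, hr_ball⟩ := hy
  have hfreq : ∃ᶠ c in 𝓝[>] 0, hausdorff2 Y (ball y c) ≤ ENNReal.ofReal (k * c ^ 2) :=
    (tendsto_nhdsWithin_of_tendsto_nhds_of_eventually_within r hr_lim
      (Eventually.of_forall hr_pos)).frequently (Frequently.of_forall hr_ball)
  refine nonpos_iff_eq_zero.1 ?_
  calc modulus (curvesThrough y)
      ≤ modulus (⋃ n : ℕ, curvesThroughExitingBall y (1 / (n + 1))) :=
        modulus_mono (curvesThrough_subset_iUnion_curvesThroughExitingBall y)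
    _ ≤ ∑' n : ℕ, modulus (curvesThroughExitingBall y (1 / (n + 1))) := modulus_iUnion_le _
    _ = 0 := ENNReal.tsum_eq_zero.2 fun n ↦
        modulus_curvesThroughExitingBall_eq_zero hfreq (by positivity)
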